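/- arXiv:2005.04053 — 3 statements merged into one kernel-verified Lean document; each statement's English description precedes it below -/
import Mathlib

section
/- Consequently, if the symbolic closed-loop system satisfies an LTL specification whose atomic propositions are unions of partition sets (i.e., sets of the form q⁻¹(Aa) for Aa ⊆ Xa), then the concrete closed-loop system under the refined controller satisfies the same specification. -/
/-- `IsTraj F C x`: `x` is a closed-loop trajectory of the transition system with
transition map `F` under controller `C`. -/
def IsTraj {X U : Type*} (F : X → U → Set X) (C : X → U) (x : ℕ → X) : Prop :=
  ∀ n : ℕ, x (n + 1) ∈ F (x n) (C (x n))

/-- Satisfaction of a partition-respecting safety specification transfers from the symbolic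
closed loop to the concrete closed loop: if `Fa` overapproximates `F` through the quotient map
`q` and every abstract trajectory under `Ca` starting in `Aa` stays in `Aa` forever, then every
concrete trajectory under the refined controller `C = Ca ∘ q` starting in `q⁻¹(Aa)` stays in
`q⁻¹(Aa)` forever. -/
theorem safety_spec_transfers_to_concrete {X Xa U : Type*}
    (F : X → U → Set X) (Fa : Xa → U → Set Xa) (q : X → Xa) (Ca : Xa → U) (Aa : Set Xa)
    (hover : ∀ (x : X) (u : U) (y : X), y ∈ F x u → q y ∈ Fa (q x) u)
    (habs : ∀ xa : ℕ → Xa, IsTraj Fa Ca xa → xa 0 ∈ Aa → ∀ n, xa n ∈ Aa) :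
    ∀ x : ℕ → X, IsTraj F (fun s => Ca (q s)) x → x 0 ∈ q ⁻¹' Aa →
      ∀ n, x n ∈ q ⁻¹' Aa := by
  intro x hx h0 n
  exact habs (fun n => q (x n)) (fun n => hover _ _ _ (hx n)) h0 n
end

section
/- For ẋ = Ax, with L the Metzler majorant of A (Lᵢᵢ = Aᵢᵢ, Lᵢⱼ = |Aᵢⱼ| for i ≠ j), the difference e(t) = x(t) − y(t) of any two solutions x, y satisfies |e(τ)| ≤ e^{Lτ}|e(0)| componentwise for all τ ≥ 0. -/
open Matrix

-- entrywise power bound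
lemma pow_entry_abs_le {n : ℕ} (M N : Matrix (Fin n) (Fin n) ℝ)
    (h : ∀ i j, |M i j| ≤ N i j) (k : ℕ) :
    ∀ i j, |(M ^ k) i j| ≤ (N ^ k) i j := by
  induction k with
  | zero =>
    intro i j
    by_cases hij : i = j <;> simp [pow_zero, Matrix.one_apply, hij]
  | succ k ih =>
    intro i j
    rw [pow_succ, pow_succ, Matrix.mul_apply, Matrix.mul_apply]
    calc |∑ l, (M ^ k) i l * M l j| ≤ ∑ l, |(M ^ k) i l * M l j| :=
          Finset.abs_sum_le_sum_abs _ _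
      _ ≤ ∑ l, (N ^ k) i l * N l j := by
          refine Finset.sum_le_sum fun l _ => ?_
          rw [abs_mul]
          exact mul_le_mul (ih i l) (h l j) (abs_nonneg _) ((abs_nonneg _).trans (ih i l))

lemma exp_entry_abs_le {n : ℕ} (M N : Matrix (Fin n) (Fin n) ℝ)
    (h : ∀ i j, |M i j| ≤ N i j) (i j : Fin n) :
    |(NormedSpace.exp M) i j| ≤ (NormedSpace.exp N) i j := by
  letI : SeminormedRing (Matrix (Fin n) (Fin n) ℝ) := Matrix.linftyOpSemiNormedRing
  letI : NormedRing (Matrix (Fin n) (Fin n) ℝ) := Matrix.linftyOpNormedRing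
  letI : NormedAlgebra ℝ (Matrix (Fin n) (Fin n) ℝ) := Matrix.linftyOpNormedAlgebra
  have hM := NormedSpace.expSeries_hasSum_exp (𝕂 := ℝ) M
  have hN := NormedSpace.expSeries_hasSum_exp (𝕂 := ℝ) N
  simp only [NormedSpace.expSeries_apply_eq] at hM hN
  have hMij : HasSum (fun k : ℕ => (k.factorial : ℝ)⁻¹ * (M ^ k) i j)
      ((NormedSpace.exp M) i j) := by
    have := Pi.hasSum.mp (Pi.hasSum.mp hM i) j
    simp at this
    exact this
  have hNij : HasSum (fun k : ℕ => (k.factorial : ℝ)⁻¹ * (N ^ k) i j)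
      ((NormedSpace.exp N) i j) := by
    have := Pi.hasSum.mp (Pi.hasSum.mp hN i) j
    simp at this
    exact this
  have hb : ∀ k : ℕ, |(k.factorial : ℝ)⁻¹ * (M ^ k) i j| ≤
      (k.factorial : ℝ)⁻¹ * (N ^ k) i j := by
    intro k
    rw [abs_mul, abs_of_nonneg (by positivity : (0:ℝ) ≤ (k.factorial : ℝ)⁻¹)]
    exact mul_le_mul_of_nonneg_left (pow_entry_abs_le M N h k i j) (by positivity)
  rw [abs_le]
  constructor
  · have := hasSum_le (f := fun k : ℕ => -((k.factorial : ℝ)⁻¹ * (M ^ k) i j))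
      (fun k => (neg_le_abs _).trans (hb k)) hMij.neg hNij
    linarith
  · exact hasSum_le (fun k => (le_abs_self _).trans (hb k)) hMij hNij

/-- Growth bound from a Metzler majorant, linear case: let `L` be the Metzler majorant of `A`
(`L i i = A i i`, `L i j = |A i j|` for `i ≠ j`). For the linear system `ẋ = A x`, the
difference of two solutions `e(t) = e^{At} e(0)` satisfies the componentwise bound
`|e(τ)| ≤ e^{Lτ} |e(0)|` for all `τ ≥ 0`. -/
theorem metzler_growth_bound_linear {n : ℕ}
    (A L : Matrix (Fin n) (Fin n) ℝ)
    (hdiag : ∀ i, L i i = A i i)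
    (hoff : ∀ i j, i ≠ j → L i j = |A i j|)
    (e₀ : Fin n → ℝ) :
    ∀ τ ≥ (0 : ℝ), ∀ i,
      |(NormedSpace.exp (τ • A)).mulVec e₀ i| ≤
        (NormedSpace.exp (τ • L)).mulVec (fun j => |e₀ j|) i := by
  intro τ hτ i
  -- shift by c • 1 to make diagonal nonnegative
  set c : ℝ := ∑ k, |A k k| with hc
  have hcnn : ∀ k, 0 ≤ A k k + c := by
    intro k
    have h1 : |A k k| ≤ c := Finset.single_le_sum (f := fun k => |A k k|)
      (fun _ _ => abs_nonneg _) (Finset.mem_univ k)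
    have := neg_abs_le (A k k)
    linarith
  set M := A + c • (1 : Matrix (Fin n) (Fin n) ℝ) with hM
  set N := L + c • (1 : Matrix (Fin n) (Fin n) ℝ) with hN
  have key : ∀ i j, |(τ • M) i j| ≤ (τ • N) i j := by
    intro i j
    rw [hM, hN]
    by_cases hij : i = j
    · subst hij
      simp only [Matrix.smul_apply, Matrix.add_apply, Matrix.one_apply_eq, smul_eq_mul]
      rw [hdiag i, abs_of_nonneg (by nlinarith [hcnn i] : 0 ≤ τ * (A i i + c * 1))]
    · simp only [Matrix.smul_apply, Matrix.add_apply, Matrix.one_apply_ne hij, smul_eq_mul,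
        mul_zero, add_zero]
      rw [hoff i j hij, abs_mul, abs_of_nonneg hτ]
  -- exp splitting
  have split : ∀ X : Matrix (Fin n) (Fin n) ℝ,
      NormedSpace.exp (τ • (X + c • 1)) =
        Real.exp (τ * c) • NormedSpace.exp (τ • X) := by
    intro X
    have hcomm : Commute (τ • X) ((τ * c) • (1 : Matrix (Fin n) (Fin n) ℝ)) :=
      (Commute.one_right _).smul_right _
    have : τ • (X + c • 1) = τ • X + (τ * c) • (1 : Matrix (Fin n) (Fin n) ℝ) := by
      rw [smul_add, smul_smul]
    rw [this, Matrix.exp_add_of_commute _ _ hcomm]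
    have h1 : NormedSpace.exp ((τ * c) • (1 : Matrix (Fin n) (Fin n) ℝ)) =
        Real.exp (τ * c) • (1 : Matrix (Fin n) (Fin n) ℝ) := by
      letI : SeminormedRing (Matrix (Fin n) (Fin n) ℝ) := Matrix.linftyOpSemiNormedRing
      letI : NormedRing (Matrix (Fin n) (Fin n) ℝ) := Matrix.linftyOpNormedRing
      letI : NormedAlgebra ℝ (Matrix (Fin n) (Fin n) ℝ) := Matrix.linftyOpNormedAlgebra
      have := (NormedSpace.algebraMap_exp_comm (𝔸 := Matrix (Fin n) (Fin n) ℝ) (τ * c)).symm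
      rw [Algebra.algebraMap_eq_smul_one, Algebra.algebraMap_eq_smul_one] at this
      rw [Real.exp_eq_exp_ℝ]
      exact this
    rw [h1, mul_smul_comm, mul_one]
  have eA : NormedSpace.exp (τ • M) = Real.exp (τ * c) • NormedSpace.exp (τ • A) := split A
  have eL : NormedSpace.exp (τ • N) = Real.exp (τ * c) • NormedSpace.exp (τ • L) := split L
  have hent := fun j => exp_entry_abs_le (τ • M) (τ • N) key i j
  -- convert entry bounds to mulVec bound
  have main : |(NormedSpace.exp (τ • M)).mulVec e₀ i| ≤
      (NormedSpace.exp (τ • N)).mulVec (fun j => |e₀ j|) i := by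
    rw [Matrix.mulVec, Matrix.mulVec, dotProduct, dotProduct]
    calc |∑ j, (NormedSpace.exp (τ • M)) i j * e₀ j|
        ≤ ∑ j, |(NormedSpace.exp (τ • M)) i j * e₀ j| := Finset.abs_sum_le_sum_abs _ _
      _ ≤ ∑ j, (NormedSpace.exp (τ • N)) i j * |e₀ j| := by
          refine Finset.sum_le_sum fun j _ => ?_
          rw [abs_mul]
          exact mul_le_mul_of_nonneg_right (hent j) (abs_nonneg _)
  rw [eA, eL] at main
  have hpos : (0:ℝ) < Real.exp (τ * c) := Real.exp_pos _
  simp only [Matrix.smul_mulVec, Pi.smul_apply, smul_eq_mul, abs_mul,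
    abs_of_pos hpos] at main
  exact le_of_mul_le_mul_left main hpos
end

section
/- Componentwise exponential domination: for any real matrix A and vector v, |e^{At} v| ≤ e^{Lt} |v| holds componentwise for all t ≥ 0, where L is the Metzler majorant of A (Lᵢᵢ = Aᵢᵢ, Lᵢⱼ = |Aᵢⱼ| for i ≠ j) and |·| denotes componentwise absolute value. -/
/-!
Entrywise domination `|M i j| ≤ N i j` propagates to powers, hence to every partial sum of the
exponential series: `|(exp M *ᵥ v) i| ≤ (exp N *ᵥ |v|) i`. The Metzler majorant does not dominate
`A` on the diagonal, but it does after adding `c • 1` to both with `c` large enough to make the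
diagonal of `A + c • 1` nonnegative; since `c • 1` is central, the shift multiplies both
exponentials by the same factor `Real.exp c`, which cancels.
-/

open Matrix NormedSpace

section Order

variable {m n R : Type*} [Ring R] [LinearOrder R] [IsOrderedRing R]

theorem abs_mulVec_le_mulVec [Fintype n] {M N : Matrix m n R} {v w : n → R}
    (hMN : ∀ i j, |M i j| ≤ N i j) (hvw : ∀ j, |v j| ≤ w j) (i : m) :
    |(M *ᵥ v) i| ≤ (N *ᵥ w) i :=
  calc |∑ j, M i j * v j|
      ≤ ∑ j, |M i j| * |v j| := by
        simpa only [abs_mul] using Finset.abs_sum_le_sum_abs (fun j => M i j * v j) Finset.univ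
    _ ≤ ∑ j, N i j * w j := Finset.sum_le_sum fun j _ =>
        mul_le_mul (hMN i j) (hvw j) (abs_nonneg _) ((abs_nonneg _).trans (hMN i j))

theorem abs_pow_mulVec_le_pow_mulVec [Fintype n] [DecidableEq n] {M N : Matrix n n R}
    {v w : n → R}
    (hMN : ∀ i j, |M i j| ≤ N i j) (hvw : ∀ j, |v j| ≤ w j) (k : ℕ) (i : n) :
    |(M ^ k *ᵥ v) i| ≤ (N ^ k *ᵥ w) i := by
  induction k generalizing i with
  | zero => simpa using hvw i
  | succ k ih =>
    rw [pow_succ', pow_succ', ← mulVec_mulVec, ← mulVec_mulVec]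
    exact abs_mulVec_le_mulVec hMN ih i

theorem abs_add_smul_one_le_add_smul_one [DecidableEq n] {M N : Matrix n n R} {c : R}
    (hdiag : ∀ i, M i i ≤ N i i) (hoff : ∀ i j, i ≠ j → |M i j| ≤ N i j)
    (hc : ∀ i, 0 ≤ M i i + c) (i j : n) :
    |(M + c • 1) i j| ≤ (N + c • 1) i j := by
  rcases eq_or_ne i j with rfl | hij
  · simpa [abs_of_nonneg (hc i)] using hdiag i
  · simpa [one_apply_ne hij] using hoff i j hij

end Order

theorem abs_le_of_hasSum_of_abs_le {ι α : Type*} [AddCommGroup α] [LinearOrder α]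
    [IsOrderedAddMonoid α] [TopologicalSpace α] [IsTopologicalAddGroup α] [OrderClosedTopology α]
    {f g : ι → α} {a b : α}
    (hf : HasSum f a) (hg : HasSum g b) (hfg : ∀ k, |f k| ≤ g k) : |a| ≤ b :=
  abs_le.2 ⟨by simpa using hasSum_le (fun k => neg_le_of_abs_le (hfg k)) hg.neg hf,
    hasSum_le (fun k => le_of_abs_le (hfg k)) hf hg⟩

variable {n : Type*} [Fintype n] [DecidableEq n]

theorem hasSum_exp_mulVec_apply (M : Matrix n n ℝ) (v : n → ℝ) (i : n) :
    HasSum (fun k => (k.factorial : ℝ)⁻¹ * (M ^ k *ᵥ v) i) ((exp M *ᵥ v) i) := by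
  have h := Pi.hasSum.1 (open scoped Norms.Operator in (exp_series_hasSum_exp' (𝕂 := ℝ) M).map
    (mulVec.addMonoidHomLeft v) (continuous_id.matrix_mulVec continuous_const)) i
  simp only [Function.comp_apply, mulVec.addMonoidHomLeft_apply, smul_mulVec, Pi.smul_apply,
    smul_eq_mul] at h
  exact h

theorem abs_exp_mulVec_le_exp_mulVec {M N : Matrix n n ℝ} {v w : n → ℝ}
    (hMN : ∀ i j, |M i j| ≤ N i j) (hvw : ∀ j, |v j| ≤ w j) (i : n) :
    |(exp M *ᵥ v) i| ≤ (exp N *ᵥ w) i := by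
  refine abs_le_of_hasSum_of_abs_le (hasSum_exp_mulVec_apply M v i)
    (hasSum_exp_mulVec_apply N w i) fun k => ?_
  rw [abs_mul, abs_of_nonneg (by positivity)]
  exact mul_le_mul_of_nonneg_left (abs_pow_mulVec_le_pow_mulVec hMN hvw k i) (by positivity)

theorem exp_add_smul_one (M : Matrix n n ℝ) (c : ℝ) :
    exp (M + c • 1) = Real.exp c • exp M := by
  rw [Matrix.exp_add_of_commute _ _ ((Commute.one_right M).smul_right c), smul_one_eq_diagonal,
    exp_diagonal, Pi.exp_def, ← Real.exp_eq_exp_ℝ, ← smul_one_eq_diagonal, mul_smul_comm, mul_one]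

theorem abs_exp_mulVec_le_of_diag_le_of_abs_offDiag_le {M N : Matrix n n ℝ} {v w : n → ℝ}
    (hdiag : ∀ i, M i i ≤ N i i) (hoff : ∀ i j, i ≠ j → |M i j| ≤ N i j)
    (hvw : ∀ j, |v j| ≤ w j) (i : n) :
    |(exp M *ᵥ v) i| ≤ (exp N *ᵥ w) i := by
  obtain ⟨c, hc⟩ : ∃ c, ∀ j, 0 ≤ M j j + c := ⟨∑ j, |M j j|, fun j => by
    linarith [neg_abs_le (M j j),
      Finset.single_le_sum (fun j _ => abs_nonneg (M j j)) (Finset.mem_univ j)]⟩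
  have key := abs_exp_mulVec_le_exp_mulVec (abs_add_smul_one_le_add_smul_one hdiag hoff hc) hvw i
  simp only [exp_add_smul_one, smul_mulVec, Pi.smul_apply, smul_eq_mul, abs_mul,
    abs_of_pos (Real.exp_pos c)] at key
  exact le_of_mul_le_mul_left key (Real.exp_pos c)

/-- Componentwise exponential domination: for any real matrix `A` with Metzler majorant `L`
(`L i i = A i i`, `L i j = |A i j|` for `i ≠ j`), any vector `v` and any `t ≥ 0`,
`|e^{At} v| ≤ e^{Lt} |v|` holds componentwise. -/
theorem exp_metzler_majorant_domination {n : ℕ}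
    (A L : Matrix (Fin n) (Fin n) ℝ)
    (hdiag : ∀ i, L i i = A i i)
    (hoff : ∀ i j, i ≠ j → L i j = |A i j|)
    (v : Fin n → ℝ) :
    ∀ t ≥ (0 : ℝ), ∀ i,
      |(NormedSpace.exp (t • A)).mulVec v i| ≤
        (NormedSpace.exp (t • L)).mulVec (fun j => |v j|) i := by
  intro t ht i
  refine abs_exp_mulVec_le_of_diag_le_of_abs_offDiag_le (fun j => ?_) (fun j k hjk => ?_)
    (fun j => le_rfl) i
  · simp [hdiag]
  · simp [abs_mul, abs_of_nonneg ht, hoff j k hjk]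
end
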